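/- arXiv:1308.5320 — 8 statements merged into one kernel-verified Lean document; each statement's English description precedes it below -/
import Mathlib

section
/- A polynomial f of degree n ≥ 1 over a field of characteristic zero is of the form a(x-b)^n if and only if f is divisible by its first derivative f'. -/
open Polynomial

theorem stmt_0 {K : Type*} [Field K] [CharZero K] (f : K[X]) (hdeg : 1 ≤ f.natDegree) :
    (∃ a b : K, a ≠ 0 ∧ f = C a * (X - C b) ^ f.natDegree) ↔ f.derivative ∣ f := by
  set n := f.natDegree with hn
  have hncast : (n : K) ≠ 0 := Nat.cast_ne_zero.2 (by omega)
  constructor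
  · rintro ⟨a, b, ha, hf⟩
    refine ⟨C (n : K)⁻¹ * (X - C b), ?_⟩
    have hdf : f.derivative = C a * (C (n : K) * (X - C b) ^ (n - 1)) := by
      rw [hf, derivative_C_mul, derivative_pow, derivative_X_sub_C, mul_one]
    have hns : n - 1 + 1 = n := by omega
    have key : (C (n : K)) * C (n : K)⁻¹ = 1 := by
      rw [← C_mul, mul_inv_cancel₀ hncast, C_1]
    rw [hdf]
    conv_lhs => rw [hf, ← hns, pow_succ]
    linear_combination (-(C a * (X - C b) ^ (n - 1) * (X - C b))) * key
  · rintro ⟨q, hq⟩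
    have hf0 : f ≠ 0 := fun h => by simp [hn, h] at hdeg
    have hdeg' : f.derivative.degree = ((n - 1 : ℕ) : WithBot ℕ) :=
      degree_derivative_eq f (by omega)
    have hdnat : f.derivative.natDegree = n - 1 := natDegree_eq_of_degree_eq_some hdeg'
    have hd0 : f.derivative ≠ 0 := fun h => by
      rw [h] at hdeg'; simp at hdeg'
    have hq0 : q ≠ 0 := fun h => hf0 (by rw [hq, h, mul_zero])
    have hqdeg : q.natDegree = 1 := by
      have := natDegree_mul hd0 hq0
      rw [← hq, hdnat] at this
      omega
    set c := q.coeff 1 with hc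
    have hc0 : c ≠ 0 := by
      have hlc := leadingCoeff_ne_zero.2 hq0
      rw [leadingCoeff, hqdeg] at hlc
      exact hlc
    set b : K := -(q.coeff 0) / c with hb
    have hcb : c * b = -q.coeff 0 := by
      rw [hb]; field_simp
    have hqeq : q = C c * (X - C b) := by
      have h1 := eq_X_add_C_of_natDegree_le_one (le_of_eq hqdeg)
      rw [← hc] at h1
      rw [mul_sub, ← C_mul, hcb, map_neg, sub_neg_eq_add]
      exact h1
    -- shift
    set g : K[X] := f.comp (X + C b) with hg
    have hgd : g.derivative = f.derivative.comp (X + C b) := by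
      rw [hg, derivative_comp]; simp
    have hqcomp : q.comp (X + C b) = C c * X := by
      rw [hqeq]; simp
    have hgeq : g = C c * X * g.derivative := by
      rw [hgd, hg]
      conv_lhs => rw [hq]
      rw [mul_comp, hqcomp]
      ring
    have hgdeg : g.natDegree = n := by
      rw [hg, natDegree_comp]
      simp [hn]
    have hcoeff : ∀ i : ℕ, g.coeff i = c * (g.coeff i * i) := by
      intro i
      match i with
      | 0 =>
        have h0 : (C c * X * g.derivative).coeff 0 = 0 := by
          rw [mul_assoc, coeff_C_mul, mul_coeff_zero, coeff_X_zero, zero_mul, mul_zero]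
        rw [← hgeq] at h0
        simp [h0]
      | (j+1) =>
        conv_lhs => rw [hgeq]
        rw [mul_assoc, coeff_C_mul, coeff_X_mul, coeff_derivative]
        push_cast
        ring
    have hg0 : g ≠ 0 := fun h => by
      rw [h] at hgdeg; simp at hgdeg; omega
    have hlead : g.coeff n ≠ 0 := by
      rw [← hgdeg]; exact (leadingCoeff_ne_zero.2 hg0)
    have hcn : c * n = 1 := by
      have h1 := hcoeff n
      have h2 : g.coeff n * (1 - c * n) = 0 := by
        rw [mul_sub, mul_one]
        nth_rewrite 1 [h1]; ring
      rcases mul_eq_zero.1 h2 with h | h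
      · exact absurd h hlead
      · linear_combination -h
    have hzero : ∀ i, i ≠ n → g.coeff i = 0 := by
      intro i hi
      by_cases hin : i ≤ n
      · have h1 := hcoeff i
        have h2 : g.coeff i * (1 - c * i) = 0 := by
          rw [mul_sub, mul_one]
          nth_rewrite 1 [h1]; ring
        rcases mul_eq_zero.1 h2 with h | h
        · exact h
        · exfalso
          have hci : c * i = 1 := by linear_combination -h
          have h3 : c * (n : K) = c * (i : K) := by rw [hcn, hci]
          have hcast : (n : K) = (i : K) := mul_left_cancel₀ hc0 h3
          exact hi (Nat.cast_injective hcast).symm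
      · exact coeff_eq_zero_of_natDegree_lt (by omega)
    have hgX : g = C (g.coeff n) * X ^ n := by
      ext i
      rw [coeff_C_mul, coeff_X_pow]
      by_cases h : i = n
      · simp [h]
      · simp [h, hzero i h]
    refine ⟨g.coeff n, b, hlead, ?_⟩
    have hfg : f = g.comp (X - C b) := by
      rw [hg, comp_assoc]
      simp
    rw [hfg, hgX]
    simp [← hn]
end

section
/- Let f be a monic polynomial of degree n ≥ 2 with complex coefficients having distinct roots λ_1,…,λ_k with multiplicities r_1,…,r_k, let z_{n-1} be the root of f^{(n-1)} and z_{n-2} a root of f^{(n-2)}. Then for every z ∈ ℂ, (z_{n-1} − z_{n-2})^2 = (1/(n(n−1))) · [ Σ_{j=1}^k r_j (λ_j − z)^2 − n (z_{n-1} − z)^2 ]. -/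
open Polynomial Finset
open scoped Nat

/-!
Write `e₁, e₂` for the elementary symmetric functions and `p₂` for the sum of squares of the
roots counted with multiplicity. Reading off the coefficients of `f`,
`f⁽ⁿ⁻¹⁾ = (n-1)! (n X - e₁)` and `f⁽ⁿ⁻²⁾ = (n-2)! (C(n,2) X² - (n-1) e₁ X + e₂)`, so `z_{n-1}` is the
centroid `e₁ / n` of the roots. Eliminating `e₂` from the quadratic equation for `z_{n-2}` with
`e₁² = p₂ + 2 e₂` gives `n (n-1) (z_{n-1} - z_{n-2})² = Σ (λ - z_{n-1})²`, and the parallel-axis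
identity `Σ (λ - z)² = Σ (λ - z_{n-1})² + n (z_{n-1} - z)²` turns this into the formula for every `z`.
-/

theorem Polynomial.eval_iterate_derivative_eq_factorial_mul_sum {R : Type*} [CommSemiring R]
    {p : R[X]} {m d : ℕ} (hp : p.natDegree ≤ m + d) (x : R) :
    (derivative^[m] p).eval x =
      m ! * ∑ i ∈ range (d + 1), (m + i).choose m * p.coeff (m + i) * x ^ i := by
  have hdeg : (derivative^[m] p).natDegree < d + 1 :=
    (natDegree_iterate_derivative p m).trans_lt (by omega)
  rw [eval_eq_sum_range' hdeg, mul_sum]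
  refine sum_congr rfl fun i _ => ?_
  rw [coeff_iterate_derivative, Nat.descFactorial_eq_factorial_mul_choose, nsmul_eq_mul,
    add_comm i]
  push_cast
  ring

namespace Multiset

section CommSemiring

variable {R : Type*} [CommSemiring R]

theorem esymm_zero (s : Multiset R) : s.esymm 0 = 1 := by
  simp [esymm]

theorem esymm_one (s : Multiset R) : s.esymm 1 = s.sum := by
  simp [esymm, powersetCard_one]

theorem esymm_cons_succ (a : R) (s : Multiset R) (k : ℕ) :
    (a ::ₘ s).esymm (k + 1) = s.esymm (k + 1) + a * s.esymm k := by
  simp [esymm, powersetCard_cons, map_map, sum_map_mul_left]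

theorem sq_sum_eq_sum_map_sq_add_two_mul_esymm_two (s : Multiset R) :
    s.sum ^ 2 = (s.map (· ^ 2)).sum + 2 * s.esymm 2 := by
  induction s using Multiset.induction_on with
  | empty => simp [esymm, powersetCard_zero_right]
  | cons a s ih =>
    rw [sum_cons, map_cons, sum_cons, esymm_cons_succ, esymm_one, add_sq, ih]
    ring

end CommSemiring

theorem prod_map_sum_nsmul_singleton {ι α M : Type*} [CommMonoid M] (t : Finset ι)
    (r : ι → ℕ) (l : ι → α) (g : α → M) :
    ((∑ j ∈ t, r j • ({l j} : Multiset α)).map g).prod = ∏ j ∈ t, g (l j) ^ r j := by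
  rw [← coe_mapAddMonoidHom, map_sum, prod_sum]
  simp [nsmul_singleton]

theorem sum_map_sum_nsmul_singleton {ι α M : Type*} [AddCommMonoid M] (t : Finset ι)
    (r : ι → ℕ) (l : ι → α) (g : α → M) :
    ((∑ j ∈ t, r j • ({l j} : Multiset α)).map g).sum = ∑ j ∈ t, r j • g (l j) := by
  rw [← coe_mapAddMonoidHom, map_sum, sum_sum]
  simp [nsmul_singleton]

section CommRing

variable {R : Type*} [CommRing R] (s : Multiset R)

theorem sum_map_sub_sq (y : R) :
    (s.map fun a => (a - y) ^ 2).sum = (s.map (· ^ 2)).sum - 2 * y * s.sum + card s * y ^ 2 := by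
  induction s using Multiset.induction_on with
  | empty => simp
  | cons a s ih =>
    simp only [map_cons, sum_cons, card_cons, ih]
    push_cast
    ring

theorem sum_map_sub_sq_eq_add_of_sum_eq {y : R} (hy : s.sum = card s * y) (z : R) :
    (s.map fun a => (a - z) ^ 2).sum = (s.map fun a => (a - y) ^ 2).sum + card s * (y - z) ^ 2 := by
  rw [sum_map_sub_sq, sum_map_sub_sq, hy]
  ring

theorem prod_X_sub_C_coeff_of_card_eq_add {k i : ℕ} (hs : card s = k + i) :
    (s.map fun a => X - C a).prod.coeff k = (-1) ^ i * s.esymm i := by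
  rw [prod_X_sub_C_coeff s (by omega), hs, Nat.add_sub_cancel_left]

section Nontrivial

variable [Nontrivial R] {m : ℕ}

theorem eval_iterate_derivative_prod_X_sub_C_of_card_eq_add_one (hs : card s = m + 1) (x : R) :
    (derivative^[m] (s.map fun a => X - C a).prod).eval x = m ! * ((m + 1) * x - s.sum) := by
  rw [eval_iterate_derivative_eq_factorial_mul_sum (d := 1)
    (by rw [natDegree_multiset_prod_X_sub_C_eq_card, hs])]
  simp only [sum_range_succ, sum_range_zero, zero_add, add_zero, Nat.choose_self,
    Nat.choose_succ_self_right, prod_X_sub_C_coeff_of_card_eq_add s (k := m) hs,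
    prod_X_sub_C_coeff_of_card_eq_add s (k := m + 1) (i := 0) hs, esymm_zero, esymm_one]
  push_cast
  ring

theorem eval_iterate_derivative_prod_X_sub_C_of_card_eq_add_two (hs : card s = m + 2) (x : R) :
    (derivative^[m] (s.map fun a => X - C a).prod).eval x =
      m ! * ((m + 2).choose 2 * x ^ 2 - (m + 1) * s.sum * x + s.esymm 2) := by
  rw [eval_iterate_derivative_eq_factorial_mul_sum (d := 2)
    (by rw [natDegree_multiset_prod_X_sub_C_eq_card, hs])]
  simp only [sum_range_succ, sum_range_zero, zero_add, add_zero, Nat.choose_self,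
    Nat.choose_succ_self_right, Nat.choose_symm_add (a := m) (b := 2),
    prod_X_sub_C_coeff_of_card_eq_add s (k := m) hs,
    prod_X_sub_C_coeff_of_card_eq_add s (k := m + 1) (i := 1) hs,
    prod_X_sub_C_coeff_of_card_eq_add s (k := m + 2) (i := 0) hs, esymm_zero, esymm_one]
  push_cast
  ring

end Nontrivial

end CommRing

section Field

variable {K : Type*} [Field K] [CharZero K] {s : Multiset K} {m : ℕ}

theorem sum_eq_mul_of_eval_iterate_derivative_prod_X_sub_C_eq_zero (hs : card s = m + 1) {y : K}
    (hy : (derivative^[m] (s.map fun a => X - C a).prod).eval y = 0) : s.sum = (m + 1) * y := by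
  rw [eval_iterate_derivative_prod_X_sub_C_of_card_eq_add_one s hs, mul_eq_zero] at hy
  linear_combination -hy.resolve_left (Nat.cast_ne_zero.2 m.factorial_ne_zero)

theorem mul_sub_sq_eq_sum_map_sub_sq (hs : card s = m + 2) {y x : K}
    (hy : (derivative^[m + 1] (s.map fun a => X - C a).prod).eval y = 0)
    (hx : (derivative^[m] (s.map fun a => X - C a).prod).eval x = 0) :
    ((m + 2) * (m + 1) : K) * (y - x) ^ 2 = (s.map fun a => (a - y) ^ 2).sum := by
  have hmean : s.sum = (m + 2) * y := by
    rw [sum_eq_mul_of_eval_iterate_derivative_prod_X_sub_C_eq_zero hs hy]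
    push_cast
    ring
  rw [eval_iterate_derivative_prod_X_sub_C_of_card_eq_add_two s hs, mul_eq_zero] at hx
  have hquad := hx.resolve_left (Nat.cast_ne_zero.2 m.factorial_ne_zero)
  have hchoose : (2 * (m + 2).choose 2 : K) = (m + 2) * (m + 1) := by
    have h := Nat.add_one_mul_choose_eq (m + 1) 1
    rw [Nat.choose_one_right] at h
    exact_mod_cast (by linarith : 2 * (m + 2).choose 2 = (m + 2) * (m + 1))
  rw [sum_map_sub_sq, hs]
  push_cast
  -- eliminate `p₂` via `e₁² = p₂ + 2 e₂`, then `e₂` via `hquad`, then `e₁ = (m + 2) y`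
  linear_combination s.sq_sum_eq_sum_map_sq_add_two_mul_esymm_two + 2 * hquad
    - x ^ 2 * hchoose + (-(s.sum + (m + 2) * y) + 2 * y + 2 * (m + 1) * x) * hmean

end Field

end Multiset

theorem stmt_2_general (n k : ℕ) (hn : 2 ≤ n) (l : Fin k → ℂ)
    (r : Fin k → ℕ) (hsum : ∑ j, r j = n)
    (f : ℂ[X]) (hf : f = ∏ j, (X - C (l j)) ^ r j)
    (zn1 : ℂ) (hzn1 : (derivative^[n - 1] f).eval zn1 = 0)
    (zn2 : ℂ) (hzn2 : (derivative^[n - 2] f).eval zn2 = 0) :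
    ∀ z : ℂ, (zn1 - zn2) ^ 2 =
      (1 / ((n : ℂ) * ((n : ℂ) - 1))) *
        ((∑ j, (r j : ℂ) * (l j - z) ^ 2) - (n : ℂ) * (zn1 - z) ^ 2) := by
  intro z
  obtain ⟨m, rfl⟩ : ∃ m, n = m + 2 := ⟨n - 2, by omega⟩
  set s : Multiset ℂ := ∑ j, r j • {l j}
  have hcard : Multiset.card s = m + 2 := by simp [s, hsum]
  have hfs : f = (s.map fun a => X - C a).prod :=
    hf.trans (Multiset.prod_map_sum_nsmul_singleton univ r l fun a => X - C a).symm
  rw [hfs] at hzn1 hzn2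
  have hmean : s.sum = Multiset.card s * zn1 := by
    rw [Multiset.sum_eq_mul_of_eval_iterate_derivative_prod_X_sub_C_eq_zero hcard hzn1, hcard]
    push_cast
    ring
  have hz : ∑ j, (r j : ℂ) * (l j - z) ^ 2 = (s.map fun a => (a - z) ^ 2).sum := by
    simp [s, Multiset.sum_map_sum_nsmul_singleton]
  rw [hz, s.sum_map_sub_sq_eq_add_of_sum_eq hmean,
    ← Multiset.mul_sub_sq_eq_sum_map_sub_sq hcard hzn1 hzn2, hcard]
  have hm2 : (m : ℂ) + 2 ≠ 0 := by exact_mod_cast (m + 1).succ_ne_zero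
  have hm1 : (m : ℂ) + 1 ≠ 0 := by exact_mod_cast m.succ_ne_zero
  push_cast
  rw [show (m : ℂ) + 2 - 1 = m + 1 by ring]
  field_simp
  ring

theorem stmt_2 (n k : ℕ) (hn : 2 ≤ n) (l : Fin k → ℂ) (hl : Function.Injective l)
    (r : Fin k → ℕ) (hr : ∀ j, 1 ≤ r j) (hsum : ∑ j, r j = n)
    (f : ℂ[X]) (hf : f = ∏ j, (X - C (l j)) ^ r j)
    (zn1 : ℂ) (hzn1 : (derivative^[n - 1] f).eval zn1 = 0)
    (zn2 : ℂ) (hzn2 : (derivative^[n - 2] f).eval zn2 = 0) :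
    ∀ z : ℂ, (zn1 - zn2) ^ 2 =
      (1 / ((n : ℂ) * ((n : ℂ) - 1))) *
        ((∑ j, (r j : ℂ) * (l j - z) ^ 2) - (n : ℂ) * (zn1 - z) ^ 2) :=
  stmt_2_general n k hn l r hsum f hf zn1 hzn1 zn2 hzn2
end

section
/- A polynomial with only real roots of degree n ≥ 2 is trivial (of the form a(x−b)^n) if and only if its (n−2)-th derivative has a double root. -/
/-!
Let `x` be a common zero of `f^{(n-2)}` and `f^{(n-1)}`. In the Taylor expansion of `f` at `x`
the coefficients of `(X - x)^{n-1}` and `(X - x)^{n-2}` vanish, so by Vieta the shifted roots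
`rᵢ - x` have `e₁ = e₂ = 0`. Hence `∑ (rᵢ - x)² = e₁² - 2 e₂ = 0`, and as the roots are real
they all equal `x`.
-/

open Polynomial

theorem Multiset.sq_sum_eq_sum_map_sq_add_two_mul_esymm_two_s4 {R : Type*} [CommSemiring R]
    (s : Multiset R) : s.sum ^ 2 = (s.map (· ^ 2)).sum + 2 * s.esymm 2 := by
  induction s using Multiset.induction with
  | empty => simp [esymm, powersetCard_zero_right]
  | cons a t ih =>
    have h2 : (a ::ₘ t).esymm 2 = t.esymm 2 + a * t.sum := by
      rw [esymm, esymm, powersetCard_cons, powersetCard_one, map_add, sum_add, map_map, map_map]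
      simp only [Nat.reduceAdd, Function.comp_def, prod_cons, prod_singleton]
      rw [sum_map_mul_left, map_id']
    rw [sum_cons, map_cons, sum_cons, h2, add_sq, ih]
    ring

theorem Multiset.eq_replicate_zero_of_sum_eq_zero_of_esymm_two_eq_zero {R : Type*} [CommRing R]
    [LinearOrder R] [IsStrictOrderedRing R] {s : Multiset R} (h₁ : s.sum = 0)
    (h₂ : s.esymm 2 = 0) : s = replicate (card s) 0 := by
  have hsq : (s.map (· ^ 2)).sum = 0 := by
    simpa [h₁, h₂] using (sq_sum_eq_sum_map_sq_add_two_mul_esymm_two_s4 s).symm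
  refine eq_replicate_card.2 fun r hr => pow_eq_zero_iff two_ne_zero |>.1 ?_
  exact all_zero_of_le_zero_le_of_sum_eq_zero (by simp [sq_nonneg]) hsq _ (mem_map_of_mem _ hr)

theorem Polynomial.Splits.eq_C_leadingCoeff_mul_X_pow {R : Type*} [CommRing R] [LinearOrder R]
    [IsStrictOrderedRing R] {g : R[X]} (hg : g.Splits) (hn : 2 ≤ g.natDegree)
    (h₁ : g.coeff (g.natDegree - 1) = 0) (h₂ : g.coeff (g.natDegree - 2) = 0) :
    g = C g.leadingCoeff * X ^ g.natDegree := by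
  have hlc : g.leadingCoeff ≠ 0 := leadingCoeff_ne_zero.2 (ne_zero_of_natDegree_gt hn)
  have hsum : g.roots.sum = 0 := by
    have := hg.nextCoeff_eq_neg_sum_roots_mul_leadingCoeff
    rw [nextCoeff_of_natDegree_pos (by omega), h₁] at this
    simpa [hlc] using this.symm
  have hesymm : g.roots.esymm 2 = 0 := by
    have := coeff_eq_esymm_roots_of_card (splits_iff_card_roots.1 hg) (Nat.sub_le g.natDegree 2)
    rw [h₂, Nat.sub_sub_self hn] at this
    simpa [hlc] using this.symm
  have hroots := Multiset.eq_replicate_zero_of_sum_eq_zero_of_esymm_two_eq_zero hsum hesymm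
  conv_lhs => rw [hg.eq_prod_roots, hroots]
  simp [← hg.natDegree_eq_card_roots]

theorem Polynomial.iterate_derivative_eval_eq_zero_iff {R : Type*} [CommRing R] [IsDomain R]
    [CharZero R] (f : R[X]) (k : ℕ) (r : R) :
    (derivative^[k] f).eval r = 0 ↔ (taylor r f).coeff k = 0 := by
  rw [taylor_coeff, ← factorial_smul_hasseDeriv, LinearMap.smul_apply, eval_smul, nsmul_eq_mul,
    mul_eq_zero, Nat.cast_eq_zero, or_iff_right (Nat.factorial_ne_zero k)]

theorem Polynomial.taylor_eq_C_mul_X_pow_iff {R : Type*} [CommRing R] (f : R[X]) (r a : R)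
    (n : ℕ) : taylor r f = C a * X ^ n ↔ f = C a * (X - C r) ^ n := by
  have key : taylor r (C a * (X - C r) ^ n) = C a * X ^ n := by
    simp [taylor_mul, taylor_pow, taylor_C, taylor_X]
  rw [← key, taylor_inj]

theorem stmt_4 (n : ℕ) (hn : 2 ≤ n) (f : ℝ[X]) (hdeg : f.natDegree = n)
    (hreal : f.roots.card = n) :
    (∃ a b : ℝ, a ≠ 0 ∧ f = C a * (X - C b) ^ n) ↔
      (∃ x : ℝ, (derivative^[n - 2] f).eval x = 0 ∧ (derivative^[n - 1] f).eval x = 0) := by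
  simp only [iterate_derivative_eval_eq_zero_iff]
  constructor
  · rintro ⟨a, b, -, rfl⟩
    refine ⟨b, ?_, ?_⟩ <;>
      rw [(taylor_eq_C_mul_X_pow_iff _ _ _ _).2 rfl, coeff_C_mul_X_pow, if_neg (by omega)]
  · rintro ⟨x, h₂, h₁⟩
    have hg : (taylor x f).Splits := by
      rw [taylor_apply]
      exact (splits_iff_card_roots.2 (hreal.trans hdeg.symm)).comp_X_add_C x
    have hdeg' : (taylor x f).natDegree = n := (natDegree_taylor f x).trans hdeg
    refine ⟨(taylor x f).leadingCoeff, x, ?_, ?_⟩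
    · exact leadingCoeff_ne_zero.2 (ne_zero_of_natDegree_gt (hdeg' ▸ hn))
    · rw [← taylor_eq_C_mul_X_pow_iff, ← hdeg']
      exact hg.eq_C_leadingCoeff_mul_X_pow (hdeg' ▸ hn) (hdeg' ▸ h₁) (hdeg' ▸ h₂)
end

section
/- Let f be a real polynomial of degree n ≥ 3 having at least two distinct roots, such that its (n−2)-th derivative has a double root. Then f has at least one non-real root. -/
open Polynomial

private lemma aux_all_real_roots : ∀ (d : ℕ) (f : ℝ[X]), f ≠ 0 → f.natDegree = d →
    (∀ z : ℂ, aeval z f = 0 → z.im = 0) → Multiset.card f.roots = d := by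
  intro d
  induction d with
  | zero =>
    intro f hf hdeg _
    have := f.card_roots'
    omega
  | succ d ih =>
    intro f hf hdeg hall
    have hdegpos : 0 < (f.map (algebraMap ℝ ℂ)).degree := by
      rw [degree_map]
      exact natDegree_pos_iff_degree_pos.mp (by omega)
    obtain ⟨z, hz⟩ := Complex.exists_root hdegpos
    have hz' : aeval z f = 0 := by rwa [aeval_def, eval₂_eq_eval_map]
    have him : z.im = 0 := hall z hz'
    have hzr : (z.re : ℂ) = z := Complex.ext rfl him.symm
    have hroot : f.IsRoot z.re := by
      have : aeval ((z.re : ℝ) : ℂ) f = 0 := by rw [hzr]; exact hz'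
      rw [← Complex.coe_algebraMap, aeval_algebraMap_apply] at this
      simpa using this
    obtain ⟨q, hq⟩ := (dvd_iff_isRoot).mpr hroot
    have hq0 : q ≠ 0 := by rintro rfl; simp at hq; exact hf hq
    have hXC : (X - C z.re : ℝ[X]) ≠ 0 := X_sub_C_ne_zero z.re
    have hdq : q.natDegree = d := by
      have := natDegree_mul hXC hq0
      rw [← hq, natDegree_X_sub_C] at this
      omega
    have hallq : ∀ w : ℂ, aeval w q = 0 → w.im = 0 := by
      intro w hw
      apply hall w
      rw [hq, map_mul, hw, mul_zero]
    have hcard : Multiset.card q.roots = d := ih q hq0 hdq hallq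
    rw [hq, roots_mul (hq ▸ hf), roots_X_sub_C]
    simp [hcard]

private lemma aux_step (p : ℝ[X]) (hd : 3 ≤ p.natDegree)
    (hsplit : Multiset.card p.roots = p.natDegree) (hT : 2 ≤ p.roots.toFinset.card) :
    Multiset.card (derivative p).roots = p.natDegree - 1 ∧
      2 ≤ (derivative p).roots.toFinset.card := by
  have hp0 : p ≠ 0 := by rintro rfl; simp at hd
  have hcard_le : Multiset.card p.roots ≤ Multiset.card (derivative p).roots + 1 :=
    p.card_roots_le_derivative
  have hq0 : derivative p ≠ 0 := by
    intro h
    rw [h, roots_zero] at hcard_le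
    simp at hcard_le; omega
  have hqdeg : (derivative p).natDegree ≤ p.natDegree - 1 := natDegree_derivative_le p
  have hqcard : Multiset.card (derivative p).roots = p.natDegree - 1 := by
    have := (derivative p).card_roots'
    omega
  refine ⟨hqcard, ?_⟩
  by_contra hlt
  push_neg at hlt
  have hTq : (derivative p).roots.toFinset.card ≤ 1 := by omega
  have hTp2 : p.roots.toFinset.card = 2 := by
    have := p.card_roots_toFinset_le_derivative
    omega
  obtain ⟨r, s, hrs, hpair⟩ := Finset.card_eq_two.mp hTp2
  -- sum of multiplicities
  have hsum : p.rootMultiplicity r + p.rootMultiplicity s = p.natDegree := by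
    have h1 : Multiset.card p.roots = ∑ x ∈ p.roots.toFinset, p.roots.count x :=
      (Multiset.toFinset_sum_count_eq _).symm
    rw [hpair, Finset.sum_pair hrs] at h1
    simpa [count_roots, hsplit] using h1.symm
  have hrmem : r ∈ p.roots.toFinset := by rw [hpair]; simp
  have hsmem : s ∈ p.roots.toFinset := by rw [hpair]; simp
  have hrroot : p.IsRoot r := isRoot_of_mem_roots (Multiset.mem_toFinset.mp hrmem)
  have hsroot : p.IsRoot s := isRoot_of_mem_roots (Multiset.mem_toFinset.mp hsmem)
  have hmr : 1 ≤ p.rootMultiplicity r := (rootMultiplicity_pos hp0).mpr hrroot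
  have hms : 1 ≤ p.rootMultiplicity s := (rootMultiplicity_pos hp0).mpr hsroot
  have key : ∀ t u : ℝ, t ≠ u → p.IsRoot t → p.IsRoot u → 2 ≤ p.rootMultiplicity t → False := by
    intro t u htu ht hu hmt
    have hdt : (derivative p).IsRoot t :=
      ((one_lt_rootMultiplicity_iff_isRoot hp0).mp hmt).2
    have hmem : t ∈ (derivative p).roots.toFinset :=
      Multiset.mem_toFinset.mpr ((mem_roots hq0).mpr hdt)
    have hsingle : ∀ b ∈ (derivative p).roots, b = t := by
      intro b hb
      have hb' : b ∈ (derivative p).roots.toFinset := Multiset.mem_toFinset.mpr hb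
      exact Finset.card_le_one.mp hTq b hb' t hmem
    have hrep : (derivative p).roots = Multiset.replicate (p.natDegree - 1) t := by
      rw [← hqcard]
      exact Multiset.eq_replicate_card.mpr hsingle
    have hcnt : (derivative p).rootMultiplicity t = p.natDegree - 1 := by
      rw [← count_roots, hrep, Multiset.count_replicate_self]
    have hder : (derivative p).rootMultiplicity t = p.rootMultiplicity t - 1 :=
      derivative_rootMultiplicity_of_root ht
    have hmt' : p.rootMultiplicity t = p.natDegree := by omega
    have : p.roots = Multiset.replicate p.natDegree t := by
      refine (Multiset.eq_of_le_of_card_le ?_ ?_).symm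
      · exact Multiset.le_count_iff_replicate_le.mp (by rw [count_roots]; omega)
      · simp [hsplit]
    have hu' : u ∈ p.roots := (mem_roots hp0).mpr hu
    rw [this, Multiset.mem_replicate] at hu'
    exact htu hu'.2.symm
  rcases (by omega : 2 ≤ p.rootMultiplicity r ∨ 2 ≤ p.rootMultiplicity s) with h | h
  · exact key r s hrs hrroot hsroot h
  · exact key s r hrs.symm hsroot hrroot h

theorem stmt_5 (n : ℕ) (hn : 3 ≤ n) (f : ℝ[X]) (hdeg : f.natDegree = n)
    (htwo : ∃ z w : ℂ, z ≠ w ∧ aeval z f = 0 ∧ aeval w f = 0)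
    (hdouble : ∃ x : ℝ, (derivative^[n - 2] f).eval x = 0 ∧ (derivative^[n - 1] f).eval x = 0) :
    ∃ z : ℂ, aeval z f = 0 ∧ z.im ≠ 0 := by
  by_contra hcon
  push_neg at hcon
  have hall : ∀ z : ℂ, aeval z f = 0 → z.im = 0 := fun z hz => hcon z hz
  have hf0 : f ≠ 0 := by rintro rfl; simp at hdeg; omega
  -- two distinct real roots
  obtain ⟨z, w, hzw, hz, hw⟩ := htwo
  have hzim := hall z hz
  have hwim := hall w hw
  have hzr : ((z.re : ℝ) : ℂ) = z := Complex.ext rfl hzim.symm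
  have hwr : ((w.re : ℝ) : ℂ) = w := Complex.ext rfl hwim.symm
  have hres : z.re ≠ w.re := by
    intro h; apply hzw; rw [← hzr, ← hwr, h]
  have hrootz : f.IsRoot z.re := by
    have : aeval ((z.re : ℝ) : ℂ) f = 0 := by rw [hzr]; exact hz
    rw [← Complex.coe_algebraMap, aeval_algebraMap_apply] at this
    simpa using this
  have hrootw : f.IsRoot w.re := by
    have : aeval ((w.re : ℝ) : ℂ) f = 0 := by rw [hwr]; exact hw
    rw [← Complex.coe_algebraMap, aeval_algebraMap_apply] at this
    simpa using this
  -- invariant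
  have H : ∀ k, k ≤ n - 2 → Multiset.card (derivative^[k] f).roots = n - k ∧
      2 ≤ (derivative^[k] f).roots.toFinset.card := by
    intro k
    induction k with
    | zero =>
      intro _
      constructor
      · simpa using aux_all_real_roots n f hf0 hdeg hall
      · simp only [Function.iterate_zero_apply]
        have h2 : 1 < f.roots.toFinset.card := Finset.one_lt_card.mpr
          ⟨z.re, Multiset.mem_toFinset.mpr ((mem_roots hf0).mpr hrootz),
          w.re, Multiset.mem_toFinset.mpr ((mem_roots hf0).mpr hrootw), hres⟩
        omega
    | succ k ih =>
      intro hk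
      have hk' : k ≤ n - 2 := by omega
      obtain ⟨hc, hT⟩ := ih hk'
      have hpd : (derivative^[k] f).natDegree = n - k := by
        have h1 := f.natDegree_iterate_derivative k
        have h2 := (derivative^[k] f).card_roots'
        omega
      have h3 : 3 ≤ (derivative^[k] f).natDegree := by omega
      have hstep := aux_step (derivative^[k] f) h3 (by omega) hT
      rw [Function.iterate_succ_apply']
      constructor
      · rw [hstep.1, hpd]; omega
      · exact hstep.2
  obtain ⟨hcard2, hT2⟩ := H (n - 2) le_rfl
  have hcard2' : Multiset.card (derivative^[n - 2] f).roots = 2 := by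
    rw [hcard2]; omega
  obtain ⟨x, hx1, hx2⟩ := hdouble
  set g := derivative^[n - 2] f with hg
  have hg0 : g ≠ 0 := by
    intro h; rw [h, roots_zero] at hcard2'; simp at hcard2'
  have hx2' : (derivative g).IsRoot x := by
    have hsucc : n - 1 = (n - 2) + 1 := by omega
    rw [hsucc, Function.iterate_succ_apply'] at hx2
    exact hx2
  have hmult : 1 < g.rootMultiplicity x :=
    (one_lt_rootMultiplicity_iff_isRoot hg0).mpr ⟨hx1, hx2'⟩
  have hrep : g.roots = Multiset.replicate 2 x := by
    apply (Multiset.eq_of_le_of_card_le _ _).symm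
    · rw [← Multiset.le_count_iff_replicate_le, count_roots]; omega
    · simp [hcard2']
  rw [hrep] at hT2
  simp [Multiset.toFinset_replicate] at hT2
end

section
/- Let f be a real polynomial of degree n with only real roots, having k distinct roots of multiplicities r_1,…,r_k with 2 ≤ k, and let r = max r_j and r_0 = min r_j. Then there is no m with r ≤ m < (1/2)(1 − 1/r_0)(n−1) such that all roots of f^{(m)} are among the roots of f. -/
open Polynomial

/-- A real-rooted polynomial stays real-rooted after taking derivatives, and the number of
roots (with multiplicity) of the `i`-th derivative is at least `natDegree p - i`. -/
lemma realRooted_iterate (p : ℝ[X]) (hp : p.roots.card = p.natDegree) (i : ℕ) :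
    (derivative^[i] p).roots.card = (derivative^[i] p).natDegree ∧
      p.natDegree - i ≤ (derivative^[i] p).roots.card := by
  induction i with
  | zero => exact ⟨hp, by simp [hp]⟩
  | succ i ih =>
    obtain ⟨h1, h2⟩ := ih
    rw [Function.iterate_succ_apply']
    set q := derivative^[i] p with hq
    have hlow : q.roots.card ≤ (derivative q).roots.card + 1 := card_roots_le_derivative q
    have hdle : (derivative q).natDegree ≤ q.natDegree - 1 := natDegree_derivative_le q
    have hcr : (derivative q).roots.card ≤ (derivative q).natDegree := card_roots' _
    have hcrq : q.roots.card ≤ q.natDegree := card_roots' _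
    constructor
    · omega
    · omega

/-- Any root of the derivative of a real-rooted polynomial which is not a root of the
polynomial itself is a simple root of the derivative. -/
lemma simple_new_root (p : ℝ[X]) (hp : p.roots.card = p.natDegree) {x : ℝ}
    (hx : p.eval x ≠ 0) : p.derivative.rootMultiplicity x ≤ 1 := by
  by_contra hcon
  push_neg at hcon
  have hd0 : derivative p ≠ 0 := by
    intro h0
    rw [h0] at hcon
    simp [rootMultiplicity_zero] at hcon
  have hp0 : p ≠ 0 := fun h0 => hd0 (by rw [h0, derivative_zero])
  set A := p.roots.toFinset with hA
  set T := p.derivative.roots.toFinset \ A with hT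
  have hxA : x ∉ A := by
    simp only [hA, Multiset.mem_toFinset, mem_roots hp0, IsRoot]
    intro h; exact hx h
  have hxT : x ∈ T := by
    rw [hT, Finset.mem_sdiff]
    refine ⟨?_, hxA⟩
    rw [Multiset.mem_toFinset, mem_roots hd0]
    exact (rootMultiplicity_pos hd0).mp (by omega)
  -- sums of counts over any finset are bounded by the total number of roots
  have hsum_le : ∀ S : Finset ℝ,
      (∑ y ∈ S, p.derivative.roots.count y) ≤ p.derivative.roots.card := by
    intro S
    calc (∑ y ∈ S, p.derivative.roots.count y)
        ≤ ∑ y ∈ S ∪ p.derivative.roots.toFinset, p.derivative.roots.count y :=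
          Finset.sum_le_sum_of_subset Finset.subset_union_left
      _ = ∑ y ∈ p.derivative.roots.toFinset, p.derivative.roots.count y := by
          refine (Finset.sum_subset Finset.subset_union_right ?_).symm
          intro y _ hy
          rw [Multiset.count_eq_zero]
          intro hmem
          exact hy (Multiset.mem_toFinset.mpr hmem)
      _ = p.derivative.roots.card := Multiset.toFinset_sum_count_eq _
  have hAT : Disjoint A T := Finset.disjoint_sdiff
  have key := hsum_le (A ∪ T)
  rw [Finset.sum_union hAT] at key
  -- lower bound for the sum over A
  have hAbound : p.roots.card ≤ (∑ y ∈ A, p.derivative.roots.count y) + A.card := by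
    have h1 : p.roots.card = ∑ y ∈ A, p.roots.count y := (Multiset.toFinset_sum_count_eq _).symm
    rw [h1]
    calc ∑ y ∈ A, p.roots.count y
        ≤ ∑ y ∈ A, (p.derivative.roots.count y + 1) := by
          refine Finset.sum_le_sum fun y _ => ?_
          rw [count_roots, count_roots]
          have := rootMultiplicity_sub_one_le_derivative_rootMultiplicity p y
          omega
      _ = (∑ y ∈ A, p.derivative.roots.count y) + A.card := by
          rw [Finset.sum_add_distrib]
          simp
  -- lower bound for the sum over T
  have hTbound : T.card + 1 ≤ ∑ y ∈ T, p.derivative.roots.count y := by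
    have hsplit : ∑ y ∈ T, p.derivative.roots.count y
        = p.derivative.roots.count x + ∑ y ∈ T.erase x, p.derivative.roots.count y :=
      (Finset.add_sum_erase T _ hxT).symm
    have herase : (T.erase x).card ≤ ∑ y ∈ T.erase x, p.derivative.roots.count y := by
      rw [Finset.card_eq_sum_ones]
      refine Finset.sum_le_sum fun y hy => ?_
      have hyT : y ∈ T := Finset.mem_of_mem_erase hy
      have : y ∈ p.derivative.roots.toFinset := (Finset.mem_sdiff.mp hyT).1
      exact Multiset.one_le_count_iff_mem.mpr (Multiset.mem_toFinset.mp this)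
    have hcx : 2 ≤ p.derivative.roots.count x := by rw [count_roots]; exact hcon
    have hce : (T.erase x).card = T.card - 1 := Finset.card_erase_of_mem hxT
    have hT1 : 1 ≤ T.card := Finset.card_pos.mpr ⟨x, hxT⟩
    omega
  have hcardT : A.card ≤ T.card + 1 :=
    card_roots_toFinset_le_card_roots_derivative_diff_roots_succ p
  have hub : p.derivative.roots.card ≤ p.derivative.natDegree := card_roots' _
  have hnd0 : p.natDegree ≠ 0 := by
    intro h0
    obtain ⟨a, ha⟩ := natDegree_eq_zero.mp h0
    exact hd0 (by rw [← ha, derivative_C])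
  have hnd : p.derivative.natDegree < p.natDegree := natDegree_derivative_lt hnd0
  omega

/-- Multiplicity control along iterated derivatives of a real-rooted polynomial. -/
lemma mult_iterate (p : ℝ[X]) (hp : p.roots.card = p.natDegree) (x : ℝ) (i : ℕ) :
    (derivative^[i] p).rootMultiplicity x ≤ p.rootMultiplicity x - i + 1 := by
  induction i with
  | zero => simp
  | succ i ih =>
    have hq := (realRooted_iterate p hp i).1
    rw [Function.iterate_succ_apply']
    set q := derivative^[i] p with hqdef
    by_cases h0 : q = 0
    · simp [h0]
    by_cases hr : q.rootMultiplicity x = 0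
    · have hxq : q.eval x ≠ 0 := by
        intro heval
        have := (rootMultiplicity_pos h0).mpr heval
        omega
      have := simple_new_root q hq hxq
      omega
    · have hroot : q.IsRoot x := (rootMultiplicity_pos h0).mp (Nat.pos_of_ne_zero hr)
      rw [derivative_rootMultiplicity_of_root hroot]
      omega

theorem stmt_8 (n k r0 rmax m : ℕ) (f : ℝ[X]) (hdeg : f.natDegree = n)
    (hreal : f.roots.card = n)
    (hk : f.roots.toFinset.card = k) (hk2 : 2 ≤ k)
    (hr0 : 1 ≤ r0)
    (hmin : ∀ x ∈ f.roots.toFinset, r0 ≤ f.rootMultiplicity x)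
    (hmax : ∀ x ∈ f.roots.toFinset, f.rootMultiplicity x ≤ rmax)
    (hm1 : rmax ≤ m)
    (hm2 : (m : ℝ) < (1 / 2) * (1 - 1 / (r0 : ℝ)) * ((n : ℝ) - 1))
    (hroots : ∀ x : ℝ, (derivative^[m] f).eval x = 0 → f.eval x = 0) :
    False := by
  have hfreal : f.roots.card = f.natDegree := by rw [hreal, hdeg]
  have hf0 : f ≠ 0 := by
    intro h0
    rw [h0] at hk
    simp at hk
    omega
  have hkn : k ≤ n := by
    rw [← hk, ← hreal]; exact Multiset.toFinset_card_le _
  -- r0 ≥ 2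
  have hr02 : 2 ≤ r0 := by
    by_contra hcon
    have : r0 = 1 := by omega
    rw [this] at hm2
    norm_num at hm2
    exact absurd hm2 (not_lt.mpr (by positivity))
  -- m < n
  have hmn : m < n := by
    have h1 : (1 - 1 / (r0 : ℝ)) ≤ 1 := by
      have : (0:ℝ) < r0 := by positivity
      have : 0 ≤ 1 / (r0:ℝ) := by positivity
      linarith
    by_contra hcon
    push_neg at hcon
    have hn1 : (0:ℝ) ≤ (n:ℝ) - 1 := by
      have : 1 ≤ n := by omega
      have : (1:ℝ) ≤ n := by exact_mod_cast this
      linarith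
    have : (1/2 : ℝ) * (1 - 1/(r0:ℝ)) * ((n:ℝ) - 1) ≤ (1/2) * 1 * ((n:ℝ)-1) := by
      apply mul_le_mul_of_nonneg_right _ hn1
      linarith
    have hmr : (n:ℝ) ≤ (m:ℝ) := by exact_mod_cast hcon
    nlinarith
  set g := derivative^[m] f with hg
  obtain ⟨hgreal, hglow⟩ := realRooted_iterate f hfreal m
  rw [← hg] at hgreal hglow
  have hgdeg : g.natDegree ≤ n - m := by rw [← hdeg, hg]; exact natDegree_iterate_derivative f m
  have hgcard : g.roots.card = n - m := by
    have := card_roots' g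
    rw [hdeg] at hglow
    omega
  have hg0 : g ≠ 0 := by
    intro h0
    rw [h0] at hgcard
    simp at hgcard
    omega
  -- every distinct root of g is a root of f, with multiplicity ≤ 1 in g
  have hsub : g.roots.toFinset ⊆ f.roots.toFinset := by
    intro y hy
    rw [Multiset.mem_toFinset, mem_roots hg0] at hy
    rw [Multiset.mem_toFinset, mem_roots hf0]
    exact hroots y hy
  have hmle : ∀ y ∈ g.roots.toFinset, g.roots.count y ≤ 1 := by
    intro y hy
    have hyf := hsub hy
    have h1 : f.rootMultiplicity y ≤ rmax := hmax y hyf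
    have h2 := mult_iterate f hfreal y m
    rw [← hg] at h2
    rw [count_roots]
    omega
  have hsum : g.roots.card ≤ k := by
    calc g.roots.card = ∑ y ∈ g.roots.toFinset, g.roots.count y :=
          (Multiset.toFinset_sum_count_eq _).symm
      _ ≤ ∑ _y ∈ g.roots.toFinset, 1 := Finset.sum_le_sum hmle
      _ = g.roots.toFinset.card := by simp
      _ ≤ f.roots.toFinset.card := Finset.card_le_card hsub
      _ = k := hk
  -- n ≤ m + k
  have hnmk : n ≤ m + k := by omega
  -- k * r0 ≤ n
  have hkr : k * r0 ≤ n := by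
    have : ∑ y ∈ f.roots.toFinset, r0 ≤ ∑ y ∈ f.roots.toFinset, f.roots.count y := by
      refine Finset.sum_le_sum fun y hy => ?_
      rw [count_roots]; exact hmin y hy
    rw [Finset.sum_const, Multiset.toFinset_sum_count_eq, hreal, hk, smul_eq_mul] at this
    exact this
  -- final arithmetic over ℝ
  have hR0 : (0:ℝ) < r0 := by positivity
  have hR2 : (2:ℝ) ≤ r0 := by exact_mod_cast hr02
  have hNmk : (n:ℝ) ≤ m + k := by exact_mod_cast hnmk
  have hKr : (k:ℝ) * r0 ≤ n := by exact_mod_cast hkr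
  have key : (m:ℝ) * r0 < 1/2 * ((r0:ℝ) - 1) * ((n:ℝ) - 1) := by
    have h := mul_lt_mul_of_pos_right hm2 hR0
    have hexp : (1/2 * (1 - 1/(r0:ℝ)) * ((n:ℝ)-1)) * r0 = 1/2 * ((r0:ℝ)-1) * ((n:ℝ)-1) := by
      field_simp
    rw [hexp] at h
    exact h
  have hN0 : (0:ℝ) ≤ n := by positivity
  nlinarith [mul_le_mul_of_nonneg_right hNmk (le_of_lt hR0), hKr, key, hN0, hR2]
end

section
/- Let f be a real polynomial of degree n ≥ 2 with only real roots and k ≥ 2 distinct roots λ_1,…,λ_k of multiplicities r_1,…,r_k, and suppose x_{n-1} = λ_1, i.e., the root of f^{(n-1)} is a root of f of multiplicity r_1. Then for each s ∈ {2,…,k}: |λ_s − x_{n-1}| ≤ sqrt((1/r_s − 1/(n − r_1))(n^2 − n)) · |x_{n-1} − x_{n-2}|, where x_{n-2} is a root of f^{(n-2)}. -/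
open Polynomial
open scoped Nat

lemma aux_coeffs (s : Multiset ℝ) :
    ((s.map fun t => X - C t).prod).coeff (Multiset.card s) = 1 ∧
    (∀ N : ℕ, Multiset.card s = N + 1 → ((s.map fun t => X - C t).prod).coeff N = -s.sum) ∧
    (∀ N : ℕ, Multiset.card s = N + 2 → ((s.map fun t => X - C t).prod).coeff N
        = (s.sum ^ 2 - (s.map fun t => t ^ 2).sum) / 2) := by
  induction s using Multiset.induction with
  | empty => simp
  | cons x s ih =>
    obtain ⟨ih1, ih2, ih3⟩ := ih
    set Q := (s.map fun t => X - C t).prod with hQ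
    have hdeg : Q.natDegree = Multiset.card s := natDegree_multiset_prod_X_sub_C_eq_card s
    have htop : Q.coeff (Multiset.card s + 1) = 0 :=
      coeff_eq_zero_of_natDegree_lt (by omega)
    have hc : ∀ m : ℕ, (((x ::ₘ s).map fun t => X - C t).prod).coeff (m + 1)
        = Q.coeff m - x * Q.coeff (m + 1) := by
      intro m
      rw [Multiset.map_cons, Multiset.prod_cons, sub_mul, coeff_sub, coeff_X_mul, coeff_C_mul]
    have hc0 : (((x ::ₘ s).map fun t => X - C t).prod).coeff 0 = -(x * Q.coeff 0) := by
      rw [Multiset.map_cons, Multiset.prod_cons, sub_mul, coeff_sub, mul_coeff_zero,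
        coeff_X_zero, coeff_C_mul, zero_mul, zero_sub]
    refine ⟨?_, ?_, ?_⟩
    · rw [Multiset.card_cons, hc, ih1, htop]; ring
    · intro N hN
      rw [Multiset.card_cons] at hN
      have hsN : Multiset.card s = N := by omega
      rcases N with _ | m
      · have : s = 0 := Multiset.card_eq_zero.mp hsN
        subst this
        simpa using hc0
      · have h1 : Q.coeff (m + 1) = 1 := by rw [← hsN]; exact ih1
        rw [hc, ih2 m hsN, h1, Multiset.sum_cons]; ring
    · intro N hN
      rw [Multiset.card_cons] at hN
      have hsN : Multiset.card s = N + 1 := by omega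
      rcases N with _ | m
      · obtain ⟨a, rfl⟩ := Multiset.card_eq_one.mp hsN
        have h2 := ih2 0 hsN
        rw [hc0, h2]
        simp
        ring
      · have h1 : Q.coeff (m + 1 + 1) = 1 := by rw [← hsN]; exact ih1
        rw [hc, ih3 m (by omega), ih2 (m + 1) (by omega), Multiset.sum_cons,
          Multiset.map_cons, Multiset.sum_cons]
        ring

lemma repl_facts {k : ℕ} (l : Fin k → ℝ) (r : Fin k → ℕ) (u : Finset (Fin k)) :
    (((∑ j ∈ u, Multiset.replicate (r j) (l j)).map fun t => X - C t).prod)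
      = ∏ j ∈ u, (X - C (l j)) ^ r j ∧
    Multiset.card (∑ j ∈ u, Multiset.replicate (r j) (l j)) = ∑ j ∈ u, r j ∧
    (∑ j ∈ u, Multiset.replicate (r j) (l j)).sum = ∑ j ∈ u, (r j : ℝ) * l j ∧
    ((∑ j ∈ u, Multiset.replicate (r j) (l j)).map fun t => t ^ 2).sum
      = ∑ j ∈ u, (r j : ℝ) * l j ^ 2 := by
  classical
  induction u using Finset.induction with
  | empty => simp
  | @insert a u ha ih =>
    obtain ⟨i1, i2, i3, i4⟩ := ih
    refine ⟨?_, ?_, ?_, ?_⟩ <;>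
      simp [Finset.sum_insert ha, Finset.prod_insert ha, Multiset.map_add, Multiset.prod_add,
        Multiset.sum_add, Multiset.map_replicate, Multiset.prod_replicate,
        Multiset.sum_replicate, i1, i2, i3, i4, nsmul_eq_mul, mul_comm]

set_option maxHeartbeats 1000000 in
theorem stmt_12 (n k : ℕ) (hn : 2 ≤ n) (hk : 2 ≤ k) (l : Fin k → ℝ)
    (hl : Function.Injective l) (r : Fin k → ℕ) (hr : ∀ j, 1 ≤ r j) (hsum : ∑ j, r j = n)
    (f : ℝ[X]) (hf : f = ∏ j, (X - C (l j)) ^ r j)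
    (i0 : Fin k) (hxn1 : (derivative^[n - 1] f).eval (l i0) = 0)
    (xn2 : ℝ) (hxn2 : (derivative^[n - 2] f).eval xn2 = 0) :
    ∀ s : Fin k, s ≠ i0 →
      |l s - l i0| ≤
        Real.sqrt ((1 / (r s : ℝ) - 1 / ((n : ℝ) - r i0)) * ((n : ℝ) ^ 2 - n)) *
          |l i0 - xn2| := by
  classical
  intro s hsne
  obtain ⟨m, rfl⟩ : ∃ m, n = m + 2 := ⟨n - 2, by omega⟩
  obtain ⟨hprod, hcard, hsums, hsum2⟩ := repl_facts l r Finset.univ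
  set lam := l i0 with hlam
  set ms : Multiset ℝ := ∑ j, Multiset.replicate (r j) (l j) with hms
  have hfms : f = (ms.map fun t => X - C t).prod := by rw [hf, hprod]
  have hcardn : Multiset.card ms = m + 2 := by rw [hcard, hsum]
  obtain ⟨cf1, cf2, cf3⟩ := aux_coeffs ms
  set A : ℝ := ∑ j, (r j : ℝ) * l j with hA
  set B : ℝ := ∑ j, (r j : ℝ) * l j ^ 2 with hB
  have ctop : f.coeff (m + 2) = 1 := by rw [hfms, ← hcardn]; exact cf1
  have c1 : f.coeff (m + 1) = -A := by rw [hfms, cf2 (m + 1) hcardn, hsums]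
  have c2 : f.coeff m = (A ^ 2 - B) / 2 := by rw [hfms, cf3 m hcardn, hsums, hsum2]
  have hdegf : f.natDegree = m + 2 := by
    rw [hfms, natDegree_multiset_prod_X_sub_C_eq_card, hcardn]
  -- descFactorial facts
  have hu0 : (m + 1).descFactorial (m + 1) = (m + 1)! := Nat.descFactorial_self _
  have hu1 : (m + 2).descFactorial (m + 1) = (m + 2)! := by
    have h : (m + 2).descFactorial (m + 2) = (m + 2)! := Nat.descFactorial_self _
    rw [Nat.descFactorial_succ] at h
    have h2 : m + 2 - (m + 1) = 1 := by omega
    rw [h2, one_mul] at h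
    exact h
  have hv0 : m.descFactorial m = m ! := Nat.descFactorial_self _
  have hv1 : (m + 1).descFactorial m = (m + 1)! := by
    have h : (m + 1).descFactorial (m + 1) = (m + 1)! := Nat.descFactorial_self _
    rw [Nat.descFactorial_succ] at h
    have h2 : m + 1 - m = 1 := by omega
    rw [h2, one_mul] at h
    exact h
  have hv2 : 2 * (m + 2).descFactorial m = (m + 2)! := by
    have h := Nat.descFactorial_succ (m + 2) m
    have h2 : m + 2 - m = 2 := by omega
    rw [h2] at h
    rw [← hu1, h]
  have hfs1 : (m + 2)! = (m + 2) * (m + 1)! := Nat.factorial_succ (m + 1)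
  have hfs2 : (m + 1)! = (m + 1) * m ! := Nat.factorial_succ m
  have hmfac : (0 : ℝ) < (m ! : ℝ) := by exact_mod_cast m.factorial_pos
  -- equation from x_{n-1}
  have hsub1 : m + 2 - 1 = m + 1 := by omega
  have hsub2 : m + 2 - 2 = m := by omega
  rw [hsub1] at hxn1
  rw [hsub2] at hxn2
  have hq1deg : (derivative^[m + 1] f).natDegree < 2 :=
    lt_of_le_of_lt (natDegree_iterate_derivative f (m + 1)) (by rw [hdegf]; omega)
  have hq2deg : (derivative^[m] f).natDegree < 3 :=
    lt_of_le_of_lt (natDegree_iterate_derivative f m) (by rw [hdegf]; omega)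
  rw [eval_eq_sum_range' hq1deg, Finset.sum_range_succ, Finset.sum_range_one] at hxn1
  rw [eval_eq_sum_range' hq2deg, Finset.sum_range_succ, Finset.sum_range_succ,
    Finset.sum_range_one] at hxn2
  have hadd1 : 1 + (m + 1) = m + 2 := by omega
  have hadd2 : 1 + m = m + 1 := by omega
  have hadd3 : 2 + m = m + 2 := by omega
  simp only [coeff_iterate_derivative, zero_add, pow_zero, pow_one, mul_one, smul_eq_mul,
    nsmul_eq_mul, hadd1, hadd2, hadd3] at hxn1 hxn2
  rw [hu0, hu1, ctop, c1] at hxn1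
  rw [hv0, hv1, ctop, c1, c2] at hxn2
  -- A = (m+2) * lam
  have hAval : A = ((m : ℝ) + 2) * lam := by
    have h2 : ((m + 1)! : ℝ) * (A - ((m : ℝ) + 2) * lam) = 0 := by
      rw [hfs1] at hxn1
      push_cast at hxn1 ⊢
      linear_combination -hxn1
    rcases mul_eq_zero.mp h2 with h | h
    · exfalso
      have : (0 : ℝ) < ((m + 1)! : ℝ) := by exact_mod_cast (m + 1).factorial_pos
      linarith
    · linarith
  -- main identity
  have E2 : A ^ 2 - B - 2 * ((m : ℝ) + 1) * A * xn2
      + ((m : ℝ) + 2) * ((m : ℝ) + 1) * xn2 ^ 2 = 0 := by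
    have hv2R : ((m + 2).descFactorial m : ℝ) * 2 = ((m : ℝ) + 2) * ((m : ℝ) + 1) * (m ! : ℝ) := by
      have : ((2 * (m + 2).descFactorial m : ℕ) : ℝ) = (((m + 2)! : ℕ) : ℝ) := by
        exact_mod_cast congrArg (Nat.cast (R := ℝ)) hv2
      rw [hfs1, hfs2] at this
      push_cast at this ⊢
      linarith
    have hmul : (m ! : ℝ) * (A ^ 2 - B - 2 * ((m : ℝ) + 1) * A * xn2
        + ((m : ℝ) + 2) * ((m : ℝ) + 1) * xn2 ^ 2) = (m ! : ℝ) * 0 := by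
      rw [hfs2] at hxn2
      push_cast at hxn2
      linear_combination 2 * hxn2 - xn2 ^ 2 * hv2R
    exact mul_left_cancel₀ (ne_of_gt hmfac) hmul
  set S : ℝ := ∑ j, (r j : ℝ) * (l j - lam) ^ 2 with hS
  have hsumR : ∑ j, (r j : ℝ) = (m : ℝ) + 2 := by exact_mod_cast hsum
  have MID : ((m : ℝ) + 2) * ((m : ℝ) + 1) * (lam - xn2) ^ 2 = S := by
    have hSval : S = B - 2 * lam * A + ((m : ℝ) + 2) * lam ^ 2 := by
      have h1 : S = ∑ j, ((r j : ℝ) * l j ^ 2 - 2 * lam * ((r j : ℝ) * l j)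
          + lam ^ 2 * (r j : ℝ)) := Finset.sum_congr rfl fun j _ => by ring
      rw [h1, Finset.sum_add_distrib, Finset.sum_sub_distrib, ← Finset.mul_sum,
        ← Finset.mul_sum, hsumR, ← hA, ← hB]
      ring
    rw [hSval]
    linear_combination E2 + (-A + 2 * lam + 2 * ((m : ℝ) + 1) * xn2
      - ((m : ℝ) + 2) * lam) * hAval
  -- the sum of r_j (l_j - lam) vanishes
  have F1 : ∑ j, (r j : ℝ) * (l j - lam) = 0 := by
    have h1 : ∑ j, (r j : ℝ) * (l j - lam)
        = ∑ j, ((r j : ℝ) * l j - lam * (r j : ℝ)) :=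
      Finset.sum_congr rfl fun j _ => by ring
    rw [h1, Finset.sum_sub_distrib, ← Finset.mul_sum, hsumR, ← hA, hAval]
    ring
  -- split sums over T = univ \ {i0, s}
  set T : Finset (Fin k) := Finset.univ \ {i0, s} with hT
  have hsplit : ∀ g : Fin k → ℝ, ∑ j ∈ T, g j = (∑ j, g j) - g i0 - g s := by
    intro g
    have h1 := Finset.sum_sdiff (Finset.subset_univ ({i0, s} : Finset (Fin k))) (f := g)
    have h2 : ∑ j ∈ ({i0, s} : Finset (Fin k)), g j = g i0 + g s :=
      Finset.sum_pair (fun h => hsne h.symm)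
    rw [h2] at h1
    rw [hT]
    linarith
  have hzero : l i0 - lam = 0 := by rw [hlam, sub_self]
  have hTs : ∑ j ∈ T, (r j : ℝ) * (l j - lam) = -((r s : ℝ) * (l s - lam)) := by
    rw [hsplit, F1, hzero]
    ring
  have hTr : ∑ j ∈ T, ((r j : ℝ)) = ((m : ℝ) + 2) - (r i0 : ℝ) - (r s : ℝ) := by
    rw [hsplit, hsumR]
  have hTS : ∑ j ∈ T, (r j : ℝ) * (l j - lam) ^ 2 = S - (r s : ℝ) * (l s - lam) ^ 2 := by
    rw [hsplit, hzero, ← hS]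
    ring
  -- Cauchy-Schwarz
  have cs := Finset.sum_mul_sq_le_sq_mul_sq T (fun j => Real.sqrt (r j))
    (fun j => Real.sqrt (r j) * (l j - lam))
  have e1 : ∀ j ∈ T, Real.sqrt (r j) * (Real.sqrt (r j) * (l j - lam))
      = (r j : ℝ) * (l j - lam) := fun j _ => by
    rw [← mul_assoc, Real.mul_self_sqrt (by positivity)]
  have e2 : ∀ j ∈ T, Real.sqrt (r j) ^ 2 = (r j : ℝ) := fun j _ =>
    Real.sq_sqrt (by positivity)
  have e3 : ∀ j ∈ T, (Real.sqrt (r j) * (l j - lam)) ^ 2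
      = (r j : ℝ) * (l j - lam) ^ 2 := fun j _ => by
    rw [mul_pow, Real.sq_sqrt (by positivity)]
  rw [Finset.sum_congr rfl e1, Finset.sum_congr rfl e2, Finset.sum_congr rfl e3,
    hTs, hTr, hTS] at cs
  -- numeric conclusion
  have hrs1 : (1 : ℝ) ≤ (r s : ℝ) := by exact_mod_cast hr s
  have hMrs : (0 : ℝ) ≤ (((m : ℝ) + 2) - (r i0 : ℝ) - (r s : ℝ)) := by
    rw [← hTr]
    exact Finset.sum_nonneg fun j _ => by positivity
  have hM : (0 : ℝ) < ((m : ℝ) + 2) - (r i0 : ℝ) := by linarith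
  have hS0 : (0 : ℝ) ≤ S := Finset.sum_nonneg fun j _ => by positivity
  have hrspos : (0 : ℝ) < (r s : ℝ) := by linarith
  clear hf hfms hprod hxn1 hxn2 cf1 cf2 cf3 ctop c1 c2 hdegf hq1deg hq2deg hcard hcardn
    hsums hsum2 E2 hsplit F1 e1 e2 e3 hu0 hu1 hv0 hv1 hv2 hfs1 hfs2 hmfac hzero hTs hTr hTS
  push_cast
  have hfrac : 1 / (r s : ℝ) - 1 / (((m : ℝ) + 2) - (r i0 : ℝ))
      = ((((m : ℝ) + 2) - (r i0 : ℝ)) - (r s : ℝ))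
        / ((r s : ℝ) * (((m : ℝ) + 2) - (r i0 : ℝ))) := by
    field_simp
  have hfact : ((m : ℝ) + 2) ^ 2 - ((m : ℝ) + 2) = ((m : ℝ) + 2) * ((m : ℝ) + 1) := by
    ring
  have hc_nonneg : 0 ≤ (1 / (r s : ℝ) - 1 / (((m : ℝ) + 2) - (r i0 : ℝ)))
      * (((m : ℝ) + 2) ^ 2 - ((m : ℝ) + 2)) := by
    apply mul_nonneg
    · rw [hfrac]
      positivity
    · rw [hfact]
      positivity
  rw [← Real.sqrt_sq_eq_abs (l s - lam), ← Real.sqrt_sq_eq_abs (lam - xn2),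
    ← Real.sqrt_mul hc_nonneg]
  apply Real.sqrt_le_sqrt
  rw [hfrac, hfact, div_mul_eq_mul_div, div_mul_eq_mul_div,
    le_div_iff₀ (by positivity : (0 : ℝ) < (r s : ℝ) * (((m : ℝ) + 2) - (r i0 : ℝ)))]
  have hrw : (((m : ℝ) + 2) - (r i0 : ℝ) - (r s : ℝ)) * (((m : ℝ) + 2) * ((m : ℝ) + 1))
      * (lam - xn2) ^ 2 = (((m : ℝ) + 2) - (r i0 : ℝ) - (r s : ℝ)) * S := by
    rw [← MID]
    ring
  rw [hrw]
  nlinarith [cs]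
end

section
/- Let f be a real polynomial of degree n ≥ 2 with only real roots, and let x_0 ≥ x_1 ≥ … ≥ x_{n-1} be real numbers such that f^{(ν)}(x_ν) = 0 and f(x_ν) = 0 for each ν = 0,1,…,n−1 (a non-increasing sequence of common roots of f and its derivatives). Then f is trivial, i.e., f(x) = a(x − b)^n. -/
open Polynomial

/-!
Laguerre's inequality `g'² - g g'' > 0`, valid off the zeros of a real-rooted `g` of positive
degree, shows that a multiple root of `g'` is a root of `g`, of multiplicity one higher. Since the
`x_ν` are non-increasing, the indices with `x_ν = y` form a run `A, …, A + k`, and `f^{(A)}` has a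
root of multiplicity `k + 1` at `y`; descending to `f`, the multiset of the `x_ν` is contained in,
hence equal to, the roots of `f`. Finally `f^{(n-1)}` is linear with its zero at the mean of the
roots of `f`, so the smallest root `x_{n-1}` is the mean and all roots coincide.
-/

theorem exists_run_of_antitone_fiber {α : Type*} [PartialOrder α] [DecidableEq α] {n : ℕ}
    {x : ℕ → α} (hx : ∀ i j : ℕ, i ≤ j → j < n → x j ≤ x i) {y : α}
    (hy : ((Finset.range n).filter (x · = y)).Nonempty) :
    ∃ A k, A + k < n ∧ ((Finset.range n).filter (x · = y)).card ≤ k + 1 ∧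
      ∀ i ≤ k, x (A + i) = y := by
  set F := (Finset.range n).filter (x · = y)
  obtain ⟨hAn, hxA⟩ := Finset.mem_filter.mp (F.min'_mem hy)
  obtain ⟨hBn, hxB⟩ := Finset.mem_filter.mp (F.max'_mem hy)
  rw [Finset.mem_range] at hAn hBn
  have hAB := F.min'_le_max' hy
  refine ⟨F.min' hy, F.max' hy - F.min' hy, by omega, ?_, fun i hi => ?_⟩
  · calc F.card ≤ (Finset.Icc (F.min' hy) (F.max' hy)).card :=
          Finset.card_le_card fun ν hν => Finset.mem_Icc.mpr ⟨F.min'_le ν hν, F.le_max' ν hν⟩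
      _ = _ := by rw [Nat.card_Icc]; omega
  · exact le_antisymm (hxA ▸ hx _ _ (by omega) (by omega)) (hxB ▸ hx _ _ (by omega) hBn)

namespace Polynomial

section Laguerre

variable {R : Type*}

noncomputable def laguerreForm [CommRing R] (g : R[X]) (y : R) : R :=
  (derivative g).eval y ^ 2 - g.eval y * (derivative (derivative g)).eval y

theorem laguerreForm_mul [CommRing R] (p q : R[X]) (y : R) :
    laguerreForm (p * q) y = q.eval y ^ 2 * laguerreForm p y + p.eval y ^ 2 * laguerreForm q y := by
  simp only [laguerreForm, derivative_mul, derivative_add, eval_add, eval_mul]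
  ring

theorem laguerreForm_X_sub_C [CommRing R] (r y : R) : laguerreForm (X - C r) y = 1 := by
  simp [laguerreForm]

variable [Field R] [LinearOrder R] [IsStrictOrderedRing R] {g : R[X]}

theorem Splits.laguerreForm_nonneg (hg : g.Splits) (y : R) : 0 ≤ laguerreForm g y := by
  induction hg using Submonoid.closure_induction with
  | mem p hp =>
    rcases hp with ⟨a, rfl⟩ | ⟨a, rfl⟩ <;> simp [laguerreForm]
  | one => simp [laguerreForm]
  | mul p q _ _ hp hq => rw [laguerreForm_mul]; positivity

theorem Splits.laguerreForm_pos (hg : g.Splits) (hdeg : g.natDegree ≠ 0) {y : R}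
    (hy : g.eval y ≠ 0) : 0 < laguerreForm g y := by
  obtain ⟨r, hr⟩ := Multiset.exists_mem_of_ne_zero (hg.roots_ne_zero hdeg)
  have hfactor := mul_divByMonic_eq_iff_isRoot.mpr (isRoot_of_mem_roots hr)
  rw [← hfactor] at hg hy ⊢
  have hq := (splits_X_sub_C_mul_iff.mp hg).laguerreForm_nonneg y
  have hqy : (g /ₘ (X - C r)).eval y ≠ 0 := right_ne_zero_of_mul (by rwa [eval_mul] at hy)
  rw [laguerreForm_mul, laguerreForm_X_sub_C, mul_one]
  exact add_pos_of_pos_of_nonneg (by positivity) (mul_nonneg (sq_nonneg _) hq)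

theorem Splits.rootMultiplicity_derivative_add_one (hg : g.Splits) {y : R}
    (h : 2 ≤ (derivative g).rootMultiplicity y) :
    (derivative g).rootMultiplicity y + 1 = g.rootMultiplicity y := by
  have hg' : derivative g ≠ 0 := by rintro h0; simp [h0] at h
  have hg0 : g ≠ 0 := by rintro rfl; simp at hg'
  have h1 : (derivative g).IsRoot y := by
    simpa using isRoot_iterate_derivative_of_lt_rootMultiplicity (p := derivative g) (n := 0)
      (by omega)
  have h2 : (derivative (derivative g)).IsRoot y := by
    simpa using isRoot_iterate_derivative_of_lt_rootMultiplicity (p := derivative g) (n := 1)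
      (by omega)
  have hroot : g.IsRoot y := by
    by_contra hy
    have := hg.laguerreForm_pos (derivative_ne_zero.mp hg') hy
    simp [laguerreForm, h1.eq_zero, h2.eq_zero] at this
  have := (rootMultiplicity_pos hg0).mpr hroot
  rw [derivative_rootMultiplicity_of_root hroot]
  omega

end Laguerre

theorem natDegree_iterate_derivative_eq {R : Type*} [Semiring R] [IsAddTorsionFree R] (p : R[X])
    (k : ℕ) : (derivative^[k] p).natDegree = p.natDegree - k := by
  induction k with
  | zero => rfl
  | succ k ih => rw [Function.iterate_succ_apply', natDegree_derivative, ih, Nat.sub_sub]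

theorem Splits.sum_roots_eq_of_isRoot_iterate_derivative {K : Type*} [Field K] [CharZero K]
    {f : K[X]} (hf : f.Splits) {n : ℕ} (hdeg : f.natDegree = n + 1) {b : K}
    (hb : (derivative^[n] f).IsRoot b) : f.roots.sum = (n + 1) * b := by
  have hlin := eq_X_add_C_of_natDegree_le_one (p := derivative^[n] f)
    (by have := natDegree_iterate_derivative f n; omega)
  have hvieta := hf.nextCoeff_eq_neg_sum_roots_mul_leadingCoeff
  rw [nextCoeff_of_natDegree_pos (by omega), hdeg, Nat.add_sub_cancel] at hvieta
  have hdesc : ((n + 1).descFactorial n : K) = (n + 1) * n.factorial := by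
    have := Nat.succ_descFactorial n n
    rw [Nat.add_sub_cancel_left, one_mul, Nat.descFactorial_self] at this
    exact_mod_cast this
  rw [hlin, IsRoot, eval_add, eval_mul, eval_C, eval_C, eval_X, coeff_iterate_derivative,
    coeff_iterate_derivative, zero_add, add_comm 1 n, ← hdeg, coeff_natDegree, hdeg,
    Nat.descFactorial_self, nsmul_eq_mul, nsmul_eq_mul, hdesc] at hb
  have ha : f.leadingCoeff ≠ 0 := leadingCoeff_ne_zero.mpr (by rintro rfl; simp at hdeg)
  have hfac : (n.factorial : K) ≠ 0 := Nat.cast_ne_zero.mpr n.factorial_ne_zero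
  apply mul_left_cancel₀ (mul_ne_zero hfac ha)
  linear_combination -hb + (n.factorial : K) * hvieta

section Real

variable {f : ℝ[X]}

theorem splits_derivative (hf : f.Splits) : (derivative f).Splits := by
  rw [splits_iff_card_roots] at hf ⊢
  have := card_roots_le_derivative f
  have := card_roots' (derivative f)
  rw [natDegree_derivative] at *
  omega

theorem splits_iterate_derivative (hf : f.Splits) (k : ℕ) : (derivative^[k] f).Splits := by
  induction k with
  | zero => exact hf
  | succ k ih => rw [Function.iterate_succ_apply']; exact splits_derivative ih

theorem Splits.rootMultiplicity_iterate_derivative_add (hf : f.Splits) {y : ℝ} {s : ℕ}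
    (h : 2 ≤ (derivative^[s] f).rootMultiplicity y) :
    (derivative^[s] f).rootMultiplicity y + s = f.rootMultiplicity y := by
  induction s with
  | zero => rfl
  | succ s ih =>
    rw [Function.iterate_succ_apply'] at h ⊢
    have := (splits_iterate_derivative hf s).rootMultiplicity_derivative_add_one h
    rw [← ih (by omega)]
    omega

theorem Splits.le_rootMultiplicity_of_isRoot_iterate_derivative (hf : f.Splits) {A k : ℕ}
    (hAk : A + k < f.natDegree) {y : ℝ} (hy : f.IsRoot y)
    (h : ∀ i ≤ k, (derivative^[A + i] f).IsRoot y) : k + 1 ≤ f.rootMultiplicity y := by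
  have hf0 : f ≠ 0 := by rintro rfl; simp at hAk
  rcases Nat.eq_zero_or_pos k with rfl | hk
  · exact (rootMultiplicity_pos hf0).mpr hy
  have hA : derivative^[A] f ≠ 0 := by
    intro h0
    have := natDegree_iterate_derivative_eq f A
    rw [h0, natDegree_zero] at this
    omega
  have hlt : k < (derivative^[A] f).rootMultiplicity y :=
    lt_rootMultiplicity_of_isRoot_iterate_derivative hA fun i hi => by
      rw [← Function.iterate_add_apply, add_comm]
      exact h i hi
  have := hf.rootMultiplicity_iterate_derivative_add (s := A) (y := y) (by omega)
  omega

end Real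

theorem Splits.roots_eq_map_of_antitone_common_roots {f : ℝ[X]} (hf : f.Splits)
    {n : ℕ} (hdeg : f.natDegree = n) {x : ℕ → ℝ} (hx : ∀ i j : ℕ, i ≤ j → j < n → x j ≤ x i)
    (hroots : ∀ ν < n, f.eval (x ν) = 0 ∧ (derivative^[ν] f).eval (x ν) = 0) :
    f.roots = (Finset.range n).val.map x := by
  symm
  refine Multiset.eq_of_le_of_card_le ?_ (by simp [← hdeg, hf.natDegree_eq_card_roots])
  rw [Multiset.le_iff_count]
  intro y
  rw [count_roots, Multiset.count_map]
  change ((Finset.range n).filter (y = x ·)).card ≤ _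
  simp_rw [eq_comm (a := y)]
  rcases Finset.eq_empty_or_nonempty ((Finset.range n).filter (x · = y)) with hF | hF
  · simp [hF]
  obtain ⟨A, k, hAk, hcard, hrun⟩ := exists_run_of_antitone_fiber hx hF
  refine hcard.trans
    (hf.le_rootMultiplicity_of_isRoot_iterate_derivative (A := A) (by omega) ?_ ?_)
  · exact hrun 0 (Nat.zero_le k) ▸ (hroots A (by omega)).1
  · intro i hi
    exact hrun i hi ▸ (hroots (A + i) (by omega)).2

end Polynomial

theorem stmt_16_general (n : ℕ) (f : ℝ[X]) (hdeg : f.natDegree = n)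
    (hreal : f.roots.card = n) (x : ℕ → ℝ)
    (hmono : ∀ i j : ℕ, i ≤ j → j < n → x j ≤ x i)
    (hroots : ∀ ν < n, f.eval (x ν) = 0 ∧ (derivative^[ν] f).eval (x ν) = 0) :
    ∃ a b : ℝ, f = C a * (X - C b) ^ n := by
  have hf : f.Splits := splits_iff_card_roots.mpr (hreal.trans hdeg.symm)
  have hM := hf.roots_eq_map_of_antitone_common_roots hdeg hmono hroots
  obtain ⟨b, hb⟩ : ∃ b, ∀ ν < n, x ν = b := by
    rcases n with _ | m
    · exact ⟨0, by simp⟩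
    have hsum := hf.sum_roots_eq_of_isRoot_iterate_derivative hdeg (hroots m m.lt_succ_self).2
    rw [hM, ← Finset.sum_eq_multiset_sum] at hsum
    have hdiff : ∑ ν ∈ Finset.range (m + 1), (x ν - x m) = 0 := by
      rw [Finset.sum_sub_distrib, hsum]
      simp
    refine ⟨x m, fun ν hν => ?_⟩
    have := (Finset.sum_eq_zero_iff_of_nonneg fun i hi => ?_).mp hdiff ν (Finset.mem_range.mpr hν)
    · linarith
    · exact sub_nonneg.mpr (hmono i m (by simp at hi; omega) m.lt_succ_self)
  have hroots_eq : f.roots = Multiset.replicate n b := by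
    rw [hM, Multiset.eq_replicate]
    refine ⟨by simp, fun r hr => ?_⟩
    obtain ⟨ν, hν, rfl⟩ := Multiset.mem_map.mp hr
    exact hb ν (Finset.mem_range.mp hν)
  refine ⟨f.leadingCoeff, b, ?_⟩
  conv_lhs => rw [hf.eq_prod_roots, hroots_eq]
  simp [Multiset.map_replicate, Multiset.prod_replicate]

theorem stmt_16 (n : ℕ) (hn : 2 ≤ n) (f : ℝ[X]) (hdeg : f.natDegree = n)
    (hreal : f.roots.card = n) (x : ℕ → ℝ)
    (hmono : ∀ i j : ℕ, i ≤ j → j < n → x j ≤ x i)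
    (hroots : ∀ ν < n, f.eval (x ν) = 0 ∧ (derivative^[ν] f).eval (x ν) = 0) :
    ∃ a b : ℝ, f = C a * (X - C b) ^ n :=
  stmt_16_general n f hdeg hreal x hmono hroots
end

section
/- Let f be a real polynomial of degree n ≥ 2 with only real roots such that for each ν = 0,1,…,n−1 there is a common root x_ν of f^{(ν)} and f which is the maximal root of f^{(ν)}. Then f is trivial, f(x) = a(x − b)^n. -/
open Polynomial

lemma poly_rolle (p : ℝ[X]) {a b : ℝ} (hab : a < b) (ha : p.eval a = 0)
    (hb : p.eval b = 0) : ∃ c, a < c ∧ c < b ∧ p.derivative.eval c = 0 := by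
  obtain ⟨c, hc, hc0⟩ := exists_deriv_eq_zero (f := fun x => p.eval x) hab
    ((p.continuous_aeval).continuousOn) (by simp [ha, hb])
  exact ⟨c, hc.1, hc.2, by rwa [Polynomial.deriv] at hc0⟩

theorem stmt_17 (n : ℕ) (hn : 2 ≤ n) (f : ℝ[X]) (hdeg : f.natDegree = n)
    (hreal : f.roots.card = n) (x : ℕ → ℝ)
    (hroots : ∀ ν < n, f.eval (x ν) = 0 ∧ (derivative^[ν] f).eval (x ν) = 0 ∧
      ∀ y : ℝ, (derivative^[ν] f).eval y = 0 → y ≤ x ν) :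
    ∃ a b : ℝ, f = C a * (X - C b) ^ n := by
  have hf0 : f ≠ 0 := by
    intro h
    rw [h, natDegree_zero] at hdeg
    omega
  obtain ⟨hb0, -, hbmax⟩ := hroots 0 (by omega)
  simp only [Function.iterate_zero, id] at hbmax
  set b := x 0 with hbdef
  set m := f.rootMultiplicity b with hmdef
  have hm1 : 1 ≤ m := (rootMultiplicity_pos hf0).2 hb0
  have hmle : m ≤ n := by
    have := Polynomial.natDegree_le_of_dvd (f.pow_rootMultiplicity_dvd b) hf0
    simpa [natDegree_pow, natDegree_X_sub_C, hdeg] using this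
  have hmn : m = n := by
    by_contra hne
    have hlt : m < n := lt_of_le_of_ne hmle hne
    obtain ⟨hxm_root_f, hxm_root_dm, hxm_max⟩ := hroots m hlt
    have hder_b : ∀ ν < m, (derivative^[ν] f).eval b = 0 := fun ν hν =>
      isRoot_iterate_derivative_of_lt_rootMultiplicity hν
    have hderm_b : (derivative^[m] f).eval b ≠ 0 := by
      intro h
      have : m < f.rootMultiplicity b := by
        refine lt_rootMultiplicity_of_isRoot_iterate_derivative hf0 ?_
        intro k hk
        rcases lt_or_eq_of_le hk with hk' | hk'
        · exact hder_b k hk'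
        · rw [hk']; exact h
      omega
    have hxm_lt : x m < b := by
      refine lt_of_le_of_ne (hbmax _ hxm_root_f) fun h => hderm_b (h ▸ hxm_root_dm)
    have key : ∀ ν : ℕ, ν ≤ m → 1 ≤ ν →
        ∃ c, x m < c ∧ c < b ∧ (derivative^[ν] f).eval c = 0 := by
      intro ν
      induction ν with
      | zero => omega
      | succ k ih =>
        intro hk1 _
        rcases Nat.eq_zero_or_pos k with h0 | hpos
        · subst h0
          obtain ⟨c, h1, h2, h3⟩ := poly_rolle f hxm_lt hxm_root_f hb0
          exact ⟨c, h1, h2, by simpa using h3⟩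
        · obtain ⟨c, h1, h2, h3⟩ := ih (by omega) hpos
          have hbk : (derivative^[k] f).eval b = 0 := hder_b k (by omega)
          obtain ⟨c', g1, g2, g3⟩ := poly_rolle (derivative^[k] f) h2 h3 hbk
          exact ⟨c', h1.trans g1, g2, by rwa [Function.iterate_succ_apply']⟩
    obtain ⟨c, hc1, hc2, hc3⟩ := key m le_rfl hm1
    exact absurd (hxm_max c hc3) (not_le.2 hc1)
  have hdvd : (X - C b) ^ n ∣ f := hmn ▸ f.pow_rootMultiplicity_dvd b
  obtain ⟨q, hq⟩ := hdvd
  have hX0 : (X - C b) ^ n ≠ 0 := ((monic_X_sub_C b).pow n).ne_zero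
  have hq0 : q ≠ 0 := by
    intro h
    rw [h, mul_zero] at hq
    exact hf0 hq
  have hqd : q.natDegree = 0 := by
    have := hq ▸ hdeg
    rw [natDegree_mul hX0 hq0, natDegree_pow, natDegree_X_sub_C, mul_one] at this
    omega
  refine ⟨q.coeff 0, b, ?_⟩
  rw [hq, ← eq_C_of_natDegree_eq_zero hqd, mul_comm]
end
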